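/- arXiv:2412.00941 — 4 statements merged into one kernel-verified Lean document; each statement's English description precedes it below -/
import Mathlib

section
/- Consider the blind MDP with state space S = {s0, s1, bot, top} and action set A = {w, c}, with transitions: δ(s0,w) gives probability 1/2 to s0 and 1/2 to s1; δ(s1,w) = point mass at s1; δ(s0,c) = point mass at bot; δ(s1,c) = point mass at top; and bot and top are absorbing under both actions. Then the supremum over all probability distributions σ on A of ReachProb(P_σ, top, s0) equals 1, i.e., this blind MDP is limit-sure winning for the reachability objective under memoryless policies. -/
open scoped BigOperators

/-- States of the example blind MDP. -/
inductive St | s0 | s1 | bot | top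
  deriving DecidableEq

instance : Fintype St := ⟨{St.s0, St.s1, St.bot, St.top}, fun x => by cases x <;> simp⟩

/-- Actions: wait and commit. -/
inductive Act | w | c
  deriving DecidableEq

instance : Fintype Act := ⟨{Act.w, Act.c}, fun x => by cases x <;> simp⟩

/-- Iterates whose supremum is the reachability probability. -/
noncomputable def reachAux {S : Type*} [Fintype S] [DecidableEq S]
    (P : S → S → ℝ) (t : S) : ℕ → S → ℝ
  | 0, x => if x = t then 1 else 0
  | n + 1, x => if x = t then 1 else ∑ y, P x y * reachAux P t n y

/-- Reachability probability of target `t` starting from `s` in the Markov chain `P`. -/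
noncomputable def ReachProb {S : Type*} [Fintype S] [DecidableEq S]
    (P : S → S → ℝ) (t s : S) : ℝ :=
  ⨆ n : ℕ, reachAux P t n s

/-- Transition function of the example blind MDP. -/
noncomputable def d : St → Act → St → ℝ
  | St.s0, Act.w, St.s0 => 1/2
  | St.s0, Act.w, St.s1 => 1/2
  | St.s1, Act.w, St.s1 => 1
  | St.s0, Act.c, St.bot => 1
  | St.s1, Act.c, St.top => 1
  | St.bot, _, St.bot => 1
  | St.top, _, St.top => 1
  | _, _, _ => 0

/-! Under the policy committing with probability `p > 0`, the play leaves `s0` for `s1` before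
committing with probability `(1 - p)/(1 + p) ≥ 1 - 2p`, and from `s1` it eventually commits and
reaches `top`. Letting `p → 0` gives reachability probabilities arbitrarily close to `1`; none
exceeds `1` because every policy matrix is stochastic. -/

section MarkovChain

variable {S : Type*} [Fintype S] [DecidableEq S] {P : S → S → ℝ}

theorem reachAux_target (t : S) (n : ℕ) : reachAux P t n t = 1 := by
  cases n <;> simp [reachAux]

theorem reachAux_le_one (hP : ∀ x y, 0 ≤ P x y) (hrow : ∀ x, ∑ y, P x y = 1) (t : S) :
    ∀ n x, reachAux P t n x ≤ 1
  | 0, x => by unfold reachAux; split_ifs <;> norm_num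
  | n + 1, x => by
    unfold reachAux
    split_ifs
    · rfl
    · calc ∑ y, P x y * reachAux P t n y ≤ ∑ y, P x y :=
            Finset.sum_le_sum fun y _ =>
              mul_le_of_le_one_right (hP x y) (reachAux_le_one hP hrow t n y)
        _ = 1 := hrow x

theorem bddAbove_range_reachAux (hP : ∀ x y, 0 ≤ P x y) (hrow : ∀ x, ∑ y, P x y = 1)
    (t s : S) : BddAbove (Set.range fun n => reachAux P t n s) :=
  ⟨1, Set.forall_mem_range.2 fun n => reachAux_le_one hP hrow t n s⟩

theorem reachProb_le_one (hP : ∀ x y, 0 ≤ P x y) (hrow : ∀ x, ∑ y, P x y = 1) (t s : S) :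
    ReachProb P t s ≤ 1 :=
  ciSup_le fun n => reachAux_le_one hP hrow t n s

theorem le_reachProb_of_sub_pow_le (hP : ∀ x y, 0 ≤ P x y) (hrow : ∀ x, ∑ y, P x y = 1)
    {t s : S} {c r : ℝ} (hr₀ : 0 ≤ r) (hr₁ : r < 1) (h : ∀ n, c - r ^ n ≤ reachAux P t n s) :
    c ≤ ReachProb P t s := by
  have hlim : Filter.Tendsto (fun n : ℕ => c - r ^ n) Filter.atTop (nhds c) := by
    simpa using (tendsto_pow_atTop_nhds_zero_of_lt_one hr₀ hr₁).const_sub c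
  exact le_of_tendsto' hlim fun n =>
    (h n).trans (le_ciSup (bddAbove_range_reachAux hP hrow t s) n)

end MarkovChain

section BlindMDP

variable {S A : Type*} [Fintype A] {δ : S → A → S → ℝ} {σ : A → ℝ}

def policyMatrix (δ : S → A → S → ℝ) (σ : A → ℝ) : S → S → ℝ :=
  fun s s' => ∑ a, σ a * δ s a s'

theorem policyMatrix_nonneg (hδ : ∀ s a s', 0 ≤ δ s a s') (hσ : ∀ a, 0 ≤ σ a) (s s' : S) :
    0 ≤ policyMatrix δ σ s s' :=
  Finset.sum_nonneg fun a _ => mul_nonneg (hσ a) (hδ s a s')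

theorem sum_policyMatrix [Fintype S] (hδ : ∀ s a, ∑ s', δ s a s' = 1) (hσ : ∑ a, σ a = 1)
    (s : S) : ∑ s', policyMatrix δ σ s s' = 1 := by
  simp only [policyMatrix]
  rw [Finset.sum_comm]
  simp [← Finset.mul_sum, hδ, hσ]

end BlindMDP

theorem St.sum_eq (f : St → ℝ) : ∑ s, f s = f .s0 + f .s1 + f .bot + f .top := by
  rw [show (Finset.univ : Finset St) = {.s0, .s1, .bot, .top} from rfl]
  simp [add_assoc]

theorem Act.sum_eq (f : Act → ℝ) : ∑ a, f a = f .w + f .c := by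
  rw [show (Finset.univ : Finset Act) = {.w, .c} from rfl]
  simp

theorem d_nonneg (s : St) (a : Act) (s' : St) : 0 ≤ d s a s' := by
  cases s <;> cases a <;> cases s' <;> norm_num [d]

theorem sum_d (s : St) (a : Act) : ∑ s', d s a s' = 1 := by
  cases s <;> cases a <;> norm_num [St.sum_eq, d]

def commitWith (p : ℝ) : Act → ℝ
  | .w => 1 - p
  | .c => p

section CommitWith

variable {p : ℝ}

theorem commitWith_nonneg (hp₀ : 0 ≤ p) (hp₁ : p ≤ 1) (a : Act) : 0 ≤ commitWith p a := by
  cases a <;> simp only [commitWith] <;> linarith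

theorem sum_commitWith (p : ℝ) : ∑ a, commitWith p a = 1 := by
  simp [Act.sum_eq, commitWith]

theorem policyMatrix_commitWith (s s' : St) :
    policyMatrix d (commitWith p) s s' = (1 - p) * d s .w s' + p * d s .c s' := by
  simp [policyMatrix, Act.sum_eq, commitWith]

theorem reachAux_commitWith_bot (n : ℕ) :
    reachAux (policyMatrix d (commitWith p)) .top n .bot = 0 := by
  induction n with
  | zero => simp [reachAux]
  | succ n ih => simp [reachAux, St.sum_eq, policyMatrix_commitWith, d, ih]

theorem reachAux_commitWith_s1 (n : ℕ) :
    reachAux (policyMatrix d (commitWith p)) .top n .s1 = 1 - (1 - p) ^ n := by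
  induction n with
  | zero => simp [reachAux]
  | succ n ih =>
    simp only [reachAux, reduceCtorEq, ↓reduceIte, St.sum_eq, policyMatrix_commitWith, d,
      ih, reachAux_target, reachAux_commitWith_bot]
    ring

theorem sub_pow_le_reachAux_commitWith_s0 (hp₀ : 0 ≤ p) (hp₁ : p ≤ 1) (n : ℕ) :
    1 - 2 * p - (1 - p) ^ n ≤ reachAux (policyMatrix d (commitWith p)) .top n .s0 := by
  induction n with
  | zero => simpa [reachAux] using hp₀
  | succ n ih =>
    -- the step is `x ↦ (1 - p)/2 * (x + 1 - (1 - p)^n)`, and `(1 - p)^2 ≥ 1 - 2p`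
    simp only [reachAux, reduceCtorEq, ↓reduceIte, St.sum_eq, policyMatrix_commitWith, d,
      reachAux_commitWith_s1, reachAux_commitWith_bot]
    have hx := mul_le_mul_of_nonneg_left ih (by linarith : 0 ≤ (1 - p) * 2⁻¹)
    nlinarith [pow_succ (1 - p) n]

theorem one_sub_two_mul_le_reachProb_commitWith (hp₀ : 0 < p) (hp₁ : p ≤ 1) :
    1 - 2 * p ≤ ReachProb (policyMatrix d (commitWith p)) .top .s0 :=
  le_reachProb_of_sub_pow_le
    (policyMatrix_nonneg d_nonneg (commitWith_nonneg hp₀.le hp₁))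
    (sum_policyMatrix sum_d (sum_commitWith p))
    (by linarith) (by linarith) (sub_pow_le_reachAux_commitWith_s0 hp₀.le hp₁)

end CommitWith

/-- The example blind MDP is limit-sure winning under memoryless policies:
the supremum over distributions `σ` on actions of the reachability probability
of `top` from `s0` equals `1`. -/
theorem limitSure_example :
    sSup {x : ℝ | ∃ σ : Act → ℝ, (∀ a, 0 ≤ σ a) ∧ (∑ a, σ a) = 1 ∧
      x = ReachProb (fun s s' => ∑ a, σ a * d s a s') St.top St.s0} = 1 := by
  refine csSup_eq_of_forall_le_of_forall_lt_exists_gt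
    ⟨_, commitWith 0, commitWith_nonneg le_rfl zero_le_one, sum_commitWith 0, rfl⟩ ?_ ?_
  · rintro _ ⟨σ, hσ₀, hσ₁, rfl⟩
    exact reachProb_le_one (policyMatrix_nonneg d_nonneg hσ₀) (sum_policyMatrix sum_d hσ₁) _ _
  · intro w hw
    set p := min ((1 - w) / 4) 1
    have hp₀ : 0 < p := lt_min (by linarith) one_pos
    have hp₁ : p ≤ 1 := min_le_right _ _
    have hpw : p ≤ (1 - w) / 4 := min_le_left _ _
    exact ⟨_, ⟨commitWith p, commitWith_nonneg hp₀.le hp₁, sum_commitWith p, rfl⟩,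
      lt_of_lt_of_le (by linarith) (one_sub_two_mul_le_reachProb_commitWith hp₀ hp₁)⟩
end

section
/- Let A be an m × n matrix with rational entries and b ∈ ℚ^m. If there exists x ∈ ℝ^n with (A x)_i ≤ b_i for all i, then there exists x ∈ ℚ^n with (A x)_i ≤ b_i for all i. That is, a finite system of non-strict linear inequalities with rational coefficients that has a real solution also has a rational solution. -/
lemma myExistsBetween {α β : Type} [Fintype α] [Fintype β]
    (f : α → ℚ) (g : β → ℚ) (h : ∀ a b, f a ≤ g b) :
    ∃ x : ℚ, (∀ a, f a ≤ x) ∧ (∀ b, x ≤ g b) := by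
  rcases isEmpty_or_nonempty α with hα | hα
  · rcases isEmpty_or_nonempty β with hβ | hβ
    · exact ⟨0, fun a => isEmptyElim a, fun b => isEmptyElim b⟩
    · refine ⟨Finset.univ.inf' Finset.univ_nonempty g, fun a => isEmptyElim a, fun b => ?_⟩
      exact Finset.inf'_le _ (Finset.mem_univ b)
  · refine ⟨Finset.univ.sup' Finset.univ_nonempty f, fun a => Finset.le_sup' _ (Finset.mem_univ a), fun b => ?_⟩
    exact Finset.sup'_le _ _ fun a _ => h a b

lemma rat_sol_general : ∀ (n : ℕ) {ι : Type} [Fintype ι] (A : ι → Fin n → ℚ) (b : ι → ℚ),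
    (∃ x : Fin n → ℝ, ∀ i, (∑ j, (A i j : ℝ) * x j) ≤ (b i : ℝ)) →
    ∃ x : Fin n → ℚ, ∀ i, (∑ j, A i j * x j) ≤ b i := by
  intro n
  induction n with
  | zero =>
    intro ι _ A b ⟨x, hx⟩
    refine ⟨fun j => 0, fun i => ?_⟩
    have := hx i
    simp at this ⊢
    exact_mod_cast this
  | succ n ih =>
    intro ι _ A b ⟨x, hx⟩
    set a : ι → ℚ := fun i => A i 0 with ha
    -- new index type after eliminating variable 0
    let ι' := {i : ι // a i = 0} ⊕ ({p : ι // 0 < a p} × {q : ι // a q < 0})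
    let B : ι' → Fin n → ℚ := Sum.elim (fun i j => A i.1 j.succ)
      (fun pq j => A pq.1.1 j.succ / a pq.1.1 - A pq.2.1 j.succ / a pq.2.1)
    let c : ι' → ℚ := Sum.elim (fun i => b i.1)
      (fun pq => b pq.1.1 / a pq.1.1 - b pq.2.1 / a pq.2.1)
    -- the tail of x solves the new system over ℝ
    have hx' : ∀ i', (∑ j, (B i' j : ℝ) * x j.succ) ≤ (c i' : ℝ) := by
      rintro (⟨i, hi⟩ | ⟨⟨p, hp⟩, ⟨q, hq⟩⟩)
      · have := hx i
        rw [Fin.sum_univ_succ] at this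
        simp only [B, c, Sum.elim_inl]
        have hz : (A i 0 : ℝ) = 0 := by exact_mod_cast hi
        rw [hz, zero_mul, zero_add] at this
        exact this
      · have h1 := hx p
        have h2 := hx q
        rw [Fin.sum_univ_succ] at h1 h2
        have hap : (0:ℝ) < (a p : ℝ) := by exact_mod_cast hp
        have haq : ((a q : ℝ)) < 0 := by exact_mod_cast hq
        simp only [B, c, Sum.elim_inr]
        push_cast
        have key : (∑ j : Fin n, (A p j.succ : ℝ) * x j.succ) / (a p : ℝ)
            - (∑ j : Fin n, (A q j.succ : ℝ) * x j.succ) / (a q : ℝ)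
            ≤ (b p : ℝ) / (a p : ℝ) - (b q : ℝ) / (a q : ℝ) := by
          have e1 : ((a p : ℝ) * x 0 + ∑ j : Fin n, (A p j.succ : ℝ) * x j.succ) / (a p : ℝ)
              ≤ (b p : ℝ) / (a p : ℝ) := by
            exact (div_le_div_iff_of_pos_right hap).mpr h1
          have e2 : (b q : ℝ) / (a q : ℝ)
              ≤ ((a q : ℝ) * x 0 + ∑ j : Fin n, (A q j.succ : ℝ) * x j.succ) / (a q : ℝ) :=
            (div_le_div_right_of_neg haq).mpr h2
          rw [add_div, mul_div_cancel_left₀ _ (ne_of_gt hap)] at e1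
          rw [add_div, mul_div_cancel_left₀ _ (ne_of_lt haq)] at e2
          linarith
        calc ∑ j : Fin n, ((A p j.succ : ℝ) / (a p : ℝ) - (A q j.succ : ℝ) / (a q : ℝ)) * x j.succ
            = (∑ j : Fin n, (A p j.succ : ℝ) * x j.succ) / (a p : ℝ)
              - (∑ j : Fin n, (A q j.succ : ℝ) * x j.succ) / (a q : ℝ) := by
              rw [Finset.sum_div, Finset.sum_div, ← Finset.sum_sub_distrib]
              congr 1; ext j; ring
          _ ≤ _ := key
    obtain ⟨y, hy⟩ := ih B c ⟨fun j => x j.succ, hx'⟩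
    set S : ι → ℚ := fun i => ∑ j, A i j.succ * y j with hS
    have hpair : ∀ (q : {q : ι // a q < 0}) (p : {p : ι // 0 < a p}),
        (b q.1 - S q.1) / a q.1 ≤ (b p.1 - S p.1) / a p.1 := by
      rintro ⟨q, hq⟩ ⟨p, hp⟩
      have := hy (Sum.inr (⟨p, hp⟩, ⟨q, hq⟩))
      simp only [B, c, Sum.elim_inr] at this
      have e : ∑ j : Fin n, (A p j.succ / a p - A q j.succ / a q) * y j
          = S p / a p - S q / a q := by
        rw [hS]
        rw [Finset.sum_div, Finset.sum_div, ← Finset.sum_sub_distrib]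
        congr 1; ext j; ring
      rw [e] at this
      rw [sub_div, sub_div]
      have hap := hp
      have haq := hq
      have d1 : S p / a p ≤ b p / a p - b q / a q + S q / a q := by linarith
      linarith
    obtain ⟨x0, hx0l, hx0u⟩ := myExistsBetween
      (fun q : {q : ι // a q < 0} => (b q.1 - S q.1) / a q.1)
      (fun p : {p : ι // 0 < a p} => (b p.1 - S p.1) / a p.1) hpair
    refine ⟨Fin.cons x0 y, fun i => ?_⟩
    rw [Fin.sum_univ_succ]
    simp only [Fin.cons_zero, Fin.cons_succ]
    rcases lt_trichotomy (a i) 0 with hlt | heq | hgt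
    · have := hx0l ⟨i, hlt⟩
      simp only at this
      rw [div_le_iff_of_neg hlt] at this
      have : x0 * a i ≤ b i - S i := this
      rw [hS] at this
      linarith [this]
    · have := hy (Sum.inl ⟨i, heq⟩)
      simp only [B, c, Sum.elim_inl] at this
      rw [show A i 0 = a i from rfl, heq, zero_mul, zero_add]
      exact this
    · have := hx0u ⟨i, hgt⟩
      simp only at this
      rw [le_div_iff₀ hgt] at this
      rw [hS] at this
      linarith [this]

/-- A finite system of non-strict linear inequalities with rational coefficients
that has a real solution also has a rational solution. -/
theorem rational_solution_of_real_solution {m n : ℕ}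
    (A : Matrix (Fin m) (Fin n) ℚ) (b : Fin m → ℚ)
    (h : ∃ x : Fin n → ℝ, ∀ i, (∑ j, (A i j : ℝ) * x j) ≤ (b i : ℝ)) :
    ∃ x : Fin n → ℚ, ∀ i, (∑ j, A i j * x j) ≤ b i :=
  rat_sol_general n (fun i j => A i j) b h
end

section
/- Fix n ≥ 1 variables and m ≥ 1 clauses of a 3-SAT instance given by c : Fin m → Fin 3 → Fin n × Bool. Consider the associated POMDP constructed from this instance. Then the supremum over memoryless policies σ : Z → Δ(A) of ReachProb(P_σ, ⊤, s₀) equals 1 if and only if there exists an assignment v : Fin n → Bool satisfying every clause, i.e., for every j ∈ Fin m there exists k ∈ Fin 3 with v((c j k).1) = (c j k).2. -/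
open scoped BigOperators

/-- The three special states/observations of the 3-SAT POMDP. -/
inductive Sp | start | target | sink
  deriving DecidableEq

instance : Fintype Sp where
  elems := {Sp.start, Sp.target, Sp.sink}
  complete := by intro x; cases x <;> simp

/-- Transition function of the POMDP associated with a 3-SAT instance
`c : Fin m → Fin 3 → Fin n × Bool`. -/
noncomputable def satTrans (n m : ℕ) (c : Fin m → Fin 3 → Fin n × Bool) :
    (Fin m × Fin 3) ⊕ Sp → Bool → ((Fin m × Fin 3) ⊕ Sp) → ℝ :=
  fun s a s' =>
    match s with
    | Sum.inr Sp.start =>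
        match s' with
        | Sum.inl (_, k) => if k = (0 : Fin 3) then (1 : ℝ) / m else 0
        | Sum.inr _ => 0
    | Sum.inr Sp.target => if s' = Sum.inr Sp.target then 1 else 0
    | Sum.inr Sp.sink => if s' = Sum.inr Sp.sink then 1 else 0
    | Sum.inl (j, k) =>
        if a = (c j k).2 then (if s' = Sum.inr Sp.target then 1 else 0)
        else if (k : ℕ) < 2 then (if s' = Sum.inl (j, k + 1) then 1 else 0)
        else if s' = Sum.inr Sp.sink then 1 else 0

/-- Observation function of the POMDP associated with a 3-SAT instance. -/
def satObs (n m : ℕ) (c : Fin m → Fin 3 → Fin n × Bool) :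
    (Fin m × Fin 3) ⊕ Sp → Fin n ⊕ Sp
  | Sum.inl (j, k) => Sum.inl (c j k).1
  | Sum.inr x => Sum.inr x

/-!
Under a memoryless policy σ, let `p j k` be the probability that σ plays the action satisfying
literal `k` of clause `j`. A play from `s₀` picks a clause uniformly and then tries its three
literals in turn, so it reaches `⊤` with probability exactly
`1 - (1/m) ∑ j, ∏ k, (1 - p j k)`. A satisfying assignment, played deterministically, makes
every product vanish. Conversely, round σ to the assignment `v i = [σ(i)(true) ≥ 1/2]`: if the
instance is unsatisfiable, some clause is violated by `v`, each of its literals is played with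
probability at most `1/2`, its product is at least `1/8`, and so every policy reaches `⊤` with
probability at most `1 - 1/(8m)`.
-/

section MarkovChain

variable {S : Type*} [Fintype S] [DecidableEq S] {P : S → S → ℝ} {t : S}

@[simp]
lemma reachAux_self (N : ℕ) : reachAux P t N t = 1 := by
  cases N <;> simp [reachAux]

lemma reachAux_zero_of_ne {x : S} (hx : x ≠ t) : reachAux P t 0 x = 0 := by
  simp [reachAux, hx]

lemma reachAux_succ_of_ne {x : S} (hx : x ≠ t) (N : ℕ) :
    reachAux P t (N + 1) x = ∑ y, P x y * reachAux P t N y := by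
  simp [reachAux, hx]

lemma reachAux_eq_zero_of_closed {x : S} (hx : x ≠ t) (hclosed : ∀ y ≠ x, P x y = 0)
    (N : ℕ) : reachAux P t N x = 0 := by
  induction N with
  | zero => exact reachAux_zero_of_ne hx
  | succ N ih =>
    rw [reachAux_succ_of_ne hx, Finset.sum_eq_single x (fun y _ hy => by simp [hclosed y hy])
      (by simp), ih, mul_zero]

lemma reachAux_nonneg (hP : ∀ x y, 0 ≤ P x y) (N : ℕ) (x : S) : 0 ≤ reachAux P t N x := by
  induction N generalizing x with
  | zero => by_cases hx : x = t <;> simp [reachAux, hx]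
  | succ N ih =>
    by_cases hx : x = t
    · simp [hx]
    · rw [reachAux_succ_of_ne hx]
      exact Finset.sum_nonneg fun y _ => mul_nonneg (hP x y) (ih y)

lemma monotone_reachAux (hP : ∀ x y, 0 ≤ P x y) (x : S) :
    Monotone fun N => reachAux P t N x := by
  refine monotone_nat_of_le_succ fun N => ?_
  induction N generalizing x with
  | zero =>
    by_cases hx : x = t
    · simp [hx]
    · rw [reachAux_zero_of_ne hx]
      exact reachAux_nonneg hP 1 x
  | succ N ih =>
    by_cases hx : x = t
    · simp [hx]
    · rw [reachAux_succ_of_ne hx, reachAux_succ_of_ne hx]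
      exact Finset.sum_le_sum fun y _ => mul_le_mul_of_nonneg_left (ih y) (hP x y)

lemma reachProb_eq_of_reachAux_add_eq (hP : ∀ x y, 0 ≤ P x y) {s : S} {N₀ : ℕ} {v : ℝ}
    (h : ∀ N, reachAux P t (N + N₀) s = v) : ReachProb P t s = v := by
  have hle : ∀ N, reachAux P t N s ≤ v := fun N =>
    h N ▸ monotone_reachAux hP s (Nat.le_add_right N N₀)
  refine le_antisymm (ciSup_le hle) ?_
  exact le_ciSup_of_le ⟨v, Set.forall_mem_range.2 hle⟩ N₀ (by simpa using (h 0).ge)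

end MarkovChain

section SatPOMDP

variable {n m : ℕ} (c : Fin m → Fin 3 → Fin n × Bool)

noncomputable def satChain (σ : Fin n ⊕ Sp → Bool → ℝ) :
    (Fin m × Fin 3) ⊕ Sp → (Fin m × Fin 3) ⊕ Sp → ℝ :=
  fun s s' => ∑ a, σ (satObs n m c s) a * satTrans n m c s a s'

def clauseNext (j : Fin m) (k : Fin 3) : (Fin m × Fin 3) ⊕ Sp :=
  if (k : ℕ) < 2 then Sum.inl (j, k + 1) else Sum.inr Sp.sink

-- the probability that a play entering clause `j` ends in the sink
def missProb (σ : Fin n ⊕ Sp → Bool → ℝ) (j : Fin m) : ℝ :=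
  ∏ k, (1 - σ (Sum.inl (c j k).1) (c j k).2)

lemma satTrans_nonneg (s : (Fin m × Fin 3) ⊕ Sp) (a : Bool) (s' : (Fin m × Fin 3) ⊕ Sp) :
    0 ≤ satTrans n m c s a s' := by
  unfold satTrans
  repeat' split
  all_goals positivity

lemma satTrans_inl (j : Fin m) (k : Fin 3) (a : Bool) (s' : (Fin m × Fin 3) ⊕ Sp) :
    satTrans n m c (Sum.inl (j, k)) a s' =
      if s' = (if a = (c j k).2 then Sum.inr Sp.target else clauseNext j k) then 1 else 0 := by
  by_cases ha : a = (c j k).2 <;> by_cases hk : (k : ℕ) < 2 <;>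
    simp [satTrans, clauseNext, ha, hk]

variable {σ : Fin n ⊕ Sp → Bool → ℝ}

lemma satChain_nonneg (hσ0 : ∀ z a, 0 ≤ σ z a) (s s' : (Fin m × Fin 3) ⊕ Sp) :
    0 ≤ satChain c σ s s' :=
  Finset.sum_nonneg fun a _ => mul_nonneg (hσ0 _ a) (satTrans_nonneg c s a s')

lemma reachAux_satChain_sink (N : ℕ) :
    reachAux (satChain c σ) (Sum.inr Sp.target) N (Sum.inr Sp.sink) = 0 :=
  reachAux_eq_zero_of_closed (by simp) (fun y hy => by simp [satChain, satTrans, hy]) N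

lemma reachAux_satChain_inl_succ (hσ1 : ∀ z, ∑ a, σ z a = 1) (N : ℕ) (j : Fin m)
    (k : Fin 3) :
    reachAux (satChain c σ) (Sum.inr Sp.target) (N + 1) (Sum.inl (j, k)) =
      σ (Sum.inl (c j k).1) (c j k).2 + (1 - σ (Sum.inl (c j k).1) (c j k).2) *
        reachAux (satChain c σ) (Sum.inr Sp.target) N (clauseNext j k) := by
  have hsum : σ (Sum.inl (c j k).1) true + σ (Sum.inl (c j k).1) false = 1 := by
    simpa [Fintype.sum_bool] using hσ1 (Sum.inl (c j k).1)
  rw [reachAux_succ_of_ne (by simp)]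
  simp only [satChain, satTrans_inl, Finset.sum_mul]
  rw [Finset.sum_comm]
  simp only [satObs, Fintype.sum_bool]
  cases (c j k).2 <;>
    simp only [if_true, Bool.false_eq_true, Bool.true_eq_false, if_false, mul_ite, mul_one,
      mul_zero, ite_mul, zero_mul, Finset.sum_ite_eq', Finset.mem_univ, reachAux_self] <;>
    linear_combination reachAux (satChain c σ) (Sum.inr Sp.target) N (clauseNext j k) * hsum

lemma reachAux_satChain_start_succ (hσ1 : ∀ z, ∑ a, σ z a = 1) (N : ℕ) :
    reachAux (satChain c σ) (Sum.inr Sp.target) (N + 1) (Sum.inr Sp.start) =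
      (∑ j, reachAux (satChain c σ) (Sum.inr Sp.target) N (Sum.inl (j, 0))) / m := by
  have hrow : ∀ y,
      satChain c σ (Sum.inr Sp.start) y = satTrans n m c (Sum.inr Sp.start) true y := fun y => by
    -- the transitions out of `s₀` do not depend on the action
    change ∑ a, σ _ a * satTrans n m c (Sum.inr Sp.start) true y = _
    rw [← Finset.sum_mul, hσ1, one_mul]
  rw [reachAux_succ_of_ne (by simp)]
  simp [hrow, Fintype.sum_sum_type, Fintype.sum_prod_type, satTrans, div_eq_inv_mul,
    Finset.mul_sum]

lemma reachAux_satChain_clause (hσ1 : ∀ z, ∑ a, σ z a = 1) (N : ℕ) (j : Fin m) :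
    reachAux (satChain c σ) (Sum.inr Sp.target) (N + 3) (Sum.inl (j, 0)) =
      1 - missProb c σ j := by
  rw [reachAux_satChain_inl_succ c hσ1, show clauseNext j 0 = Sum.inl (j, 1) from rfl,
    reachAux_satChain_inl_succ c hσ1, show clauseNext j 1 = Sum.inl (j, 2) from rfl,
    reachAux_satChain_inl_succ c hσ1, show clauseNext j 2 = Sum.inr Sp.sink from rfl,
    reachAux_satChain_sink, missProb, Fin.prod_univ_three]
  ring

lemma reachProb_satChain (hm : m ≠ 0) (hσ0 : ∀ z a, 0 ≤ σ z a)
    (hσ1 : ∀ z, ∑ a, σ z a = 1) :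
    ReachProb (satChain c σ) (Sum.inr Sp.target) (Sum.inr Sp.start) =
      1 - (∑ j, missProb c σ j) / m := by
  refine reachProb_eq_of_reachAux_add_eq (N₀ := 4) (satChain_nonneg c hσ0) fun N => ?_
  rw [show N + 4 = N + 3 + 1 from rfl, reachAux_satChain_start_succ c hσ1]
  simp only [reachAux_satChain_clause c hσ1, Finset.sum_sub_distrib, Finset.sum_const,
    Finset.card_univ, Fintype.card_fin, nsmul_eq_mul, mul_one]
  field_simp

lemma missProb_nonneg (hσ0 : ∀ z a, 0 ≤ σ z a) (hσ1 : ∀ z, ∑ a, σ z a = 1) (j : Fin m) :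
    0 ≤ missProb c σ j :=
  Finset.prod_nonneg fun k _ => sub_nonneg.2 <|
    hσ1 (Sum.inl (c j k).1) ▸ Finset.single_le_sum (fun a _ => hσ0 _ a) (Finset.mem_univ _)

lemma reachProb_satChain_le_one (hm : m ≠ 0) (hσ0 : ∀ z a, 0 ≤ σ z a)
    (hσ1 : ∀ z, ∑ a, σ z a = 1) :
    ReachProb (satChain c σ) (Sum.inr Sp.target) (Sum.inr Sp.start) ≤ 1 := by
  rw [reachProb_satChain c hm hσ0 hσ1, sub_le_self_iff]
  exact div_nonneg (Finset.sum_nonneg fun j _ => missProb_nonneg c hσ0 hσ1 j) m.cast_nonneg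

lemma le_half_of_decide_ne {p : Bool → ℝ} (hp : p true + p false = 1) {b : Bool}
    (hb : decide (1 / 2 ≤ p true) ≠ b) : p b ≤ 1 / 2 := by
  cases b <;> simp at hb <;> linarith

lemma exists_inv_eight_le_missProb (hσ1 : ∀ z, ∑ a, σ z a = 1)
    (hunsat : ∀ v : Fin n → Bool, ∃ j, ∀ k, v (c j k).1 ≠ (c j k).2) :
    ∃ j, 8⁻¹ ≤ missProb c σ j := by
  obtain ⟨j, hj⟩ := hunsat fun i => decide (1 / 2 ≤ σ (Sum.inl i) true)
  refine ⟨j, ?_⟩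
  calc (8⁻¹ : ℝ) = ∏ _k : Fin 3, 1 / 2 := by norm_num
    _ ≤ missProb c σ j := Finset.prod_le_prod (fun _ _ => by norm_num) fun k _ => by
      have hp : σ (Sum.inl (c j k).1) true + σ (Sum.inl (c j k).1) false = 1 := by
        simpa [Fintype.sum_bool] using hσ1 (Sum.inl (c j k).1)
      linarith [le_half_of_decide_ne hp (hj k)]

lemma reachProb_satChain_le_of_unsat (hm : m ≠ 0) (hσ0 : ∀ z a, 0 ≤ σ z a)
    (hσ1 : ∀ z, ∑ a, σ z a = 1)
    (hunsat : ∀ v : Fin n → Bool, ∃ j, ∀ k, v (c j k).1 ≠ (c j k).2) :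
    ReachProb (satChain c σ) (Sum.inr Sp.target) (Sum.inr Sp.start) ≤
      1 - (8 * (m : ℝ))⁻¹ := by
  obtain ⟨j, hj⟩ := exists_inv_eight_le_missProb c hσ1 hunsat
  have hsum : 8⁻¹ ≤ ∑ j, missProb c σ j := hj.trans <|
    Finset.single_le_sum (fun j _ => missProb_nonneg c hσ0 hσ1 j) (Finset.mem_univ j)
  rw [reachProb_satChain c hm hσ0 hσ1, sub_le_sub_iff_left, mul_inv, div_eq_mul_inv]
  exact mul_le_mul_of_nonneg_right hsum (by positivity)

def assignmentPolicy (v : Fin n → Bool) (z : Fin n ⊕ Sp) (a : Bool) : ℝ :=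
  if a = Sum.elim v (fun _ => true) z then 1 else 0

lemma assignmentPolicy_nonneg (v : Fin n → Bool) (z : Fin n ⊕ Sp) (a : Bool) :
    0 ≤ assignmentPolicy v z a := by
  unfold assignmentPolicy; split_ifs <;> norm_num

lemma sum_assignmentPolicy (v : Fin n → Bool) (z : Fin n ⊕ Sp) :
    ∑ a, assignmentPolicy v z a = 1 := by
  simp [assignmentPolicy]

lemma reachProb_satChain_assignmentPolicy (hm : m ≠ 0) {v : Fin n → Bool}
    (hv : ∀ j, ∃ k, v (c j k).1 = (c j k).2) :
    ReachProb (satChain c (assignmentPolicy v)) (Sum.inr Sp.target) (Sum.inr Sp.start) = 1 := by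
  have hmiss : ∀ j, missProb c (assignmentPolicy v) j = 0 := fun j => by
    obtain ⟨k, hk⟩ := hv j
    exact Finset.prod_eq_zero (Finset.mem_univ k) (by simp [assignmentPolicy, hk])
  simp [reachProb_satChain c hm (assignmentPolicy_nonneg v) (sum_assignmentPolicy v), hmiss]

end SatPOMDP

theorem satPOMDP_limitSure_iff_satisfiable_general (n m : ℕ) (hm : 1 ≤ m)
    (c : Fin m → Fin 3 → Fin n × Bool) :
    sSup {x : ℝ | ∃ σ : (Fin n ⊕ Sp) → Bool → ℝ,
        (∀ z a, 0 ≤ σ z a) ∧ (∀ z, (∑ a, σ z a) = 1) ∧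
        x = ReachProb
          (fun s s' => ∑ a, σ (satObs n m c s) a * satTrans n m c s a s')
          (Sum.inr Sp.target) (Sum.inr Sp.start)} = 1 ↔
    ∃ v : Fin n → Bool, ∀ j : Fin m, ∃ k : Fin 3, v (c j k).1 = (c j k).2 := by
  have hm0 : m ≠ 0 := by omega
  constructor
  · intro hsup
    by_contra! hunsat
    have hlt : 1 - (8 * (m : ℝ))⁻¹ < 1 := sub_lt_self 1 (by positivity)
    refine hlt.not_ge (hsup.ge.trans (Real.sSup_le ?_ (sub_nonneg.2 ?_)))
    · rintro _ ⟨σ, hσ0, hσ1, rfl⟩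
      exact reachProb_satChain_le_of_unsat c hm0 hσ0 hσ1 hunsat
    · exact inv_le_one_of_one_le₀ (by norm_cast; omega)
  · rintro ⟨v, hv⟩
    refine IsGreatest.csSup_eq ⟨⟨assignmentPolicy v, assignmentPolicy_nonneg v,
      sum_assignmentPolicy v, (reachProb_satChain_assignmentPolicy c hm0 hv).symm⟩, ?_⟩
    rintro _ ⟨σ, hσ0, hσ1, rfl⟩
    exact reachProb_satChain_le_one c hm0 hσ0 hσ1

/-- The POMDP associated with a 3-SAT instance is limit-sure winning for
reaching the target under memoryless policies iff the 3-SAT instance is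
satisfiable. -/
theorem satPOMDP_limitSure_iff_satisfiable (n m : ℕ) (hn : 1 ≤ n) (hm : 1 ≤ m)
    (c : Fin m → Fin 3 → Fin n × Bool) :
    sSup {x : ℝ | ∃ σ : (Fin n ⊕ Sp) → Bool → ℝ,
        (∀ z a, 0 ≤ σ z a) ∧ (∀ z, (∑ a, σ z a) = 1) ∧
        x = ReachProb
          (fun s s' => ∑ a, σ (satObs n m c s) a * satTrans n m c s a s')
          (Sum.inr Sp.target) (Sum.inr Sp.start)} = 1 ↔
    ∃ v : Fin n → Bool, ∀ j : Fin m, ∃ k : Fin 3, v (c j k).1 = (c j k).2 :=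
  satPOMDP_limitSure_iff_satisfiable_general n m hm c
end

section
/- Let V be a nonempty finite type and let r : V → V → Prop be a relation (a finite directed graph). Then for every vertex v ∈ V there exists a vertex w reachable from v (i.e., ReflTransGen r v w) such that every vertex reachable from w can reach back to w: for all u, ReflTransGen r w u implies ReflTransGen r u w. In particular, every finite directed graph contains a bottom strongly connected component reachable from any given vertex. -/
/-- Every finite directed graph contains, reachable from any given vertex `v`, a
vertex `w` lying in a bottom strongly connected component: every vertex
reachable from `w` can reach back to `w`. -/
theorem exists_bottom_scc_reachable {V : Type*} [Fintype V] [Nonempty V]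
    (r : V → V → Prop) (v : V) :
    ∃ w : V, Relation.ReflTransGen r v w ∧
      ∀ u : V, Relation.ReflTransGen r w u → Relation.ReflTransGen r u w := by
  classical
  set f : V → ℕ := fun x => (Finset.univ.filter (fun y => Relation.ReflTransGen r x y)).card
  have hS : v ∈ Finset.univ.filter (fun x => Relation.ReflTransGen r v x) := by
    simp [Relation.ReflTransGen.refl]
  obtain ⟨w, hw, hmin⟩ := Finset.exists_min_image _ f ⟨v, hS⟩
  simp only [Finset.mem_filter, Finset.mem_univ, true_and] at hw
  refine ⟨w, hw, fun u hu => ?_⟩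
  have hu' : u ∈ Finset.univ.filter (fun x => Relation.ReflTransGen r v x) := by
    simp [hw.trans hu]
  have hsub : (Finset.univ.filter (fun y => Relation.ReflTransGen r u y)) ⊆
      (Finset.univ.filter (fun y => Relation.ReflTransGen r w y)) := by
    intro y hy
    simp only [Finset.mem_filter, Finset.mem_univ, true_and] at hy ⊢
    exact hu.trans hy
  have hle : f w ≤ f u := hmin u hu'
  have heq : (Finset.univ.filter (fun y => Relation.ReflTransGen r u y)) =
      (Finset.univ.filter (fun y => Relation.ReflTransGen r w y)) :=
    Finset.eq_of_subset_of_card_le hsub hle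
  have : w ∈ Finset.univ.filter (fun y => Relation.ReflTransGen r u y) := by
    rw [heq]; simp [Relation.ReflTransGen.refl]
  simpa using this
end
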